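/- For functions f: X → ℝ and g: X → ℝ on a set X with constraint set C ⊆ X, if f(x) ≥ 0 and 0 ≤ g(x) < 1 for all x ∈ C, then the infimum over x ∈ C of f(x)/(1 - g(x)) equals the infimum over δ ∈ [0,1) of (1/(1-δ)) times the infimum of f(x) over x ∈ C with g(x) ≤ δ (with the convention that the infimum over an empty set is +∞). -/
import Mathlib


/-- Quasi-convex reformulation: the infimum of f/(1-g) over C equals the nested
infimum over δ ∈ [0,1) of (1/(1-δ)) times the infimum of f over {x ∈ C | g x ≤ δ},
with the convention that infima over the empty set are +∞ (in ℝ≥0∞). -/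
theorem stmt_0 {X : Type*} (C : Set X) (f g : X → ℝ)
    (hf : ∀ x ∈ C, 0 ≤ f x) (hg : ∀ x ∈ C, 0 ≤ g x ∧ g x < 1) :
    (⨅ x ∈ C, ENNReal.ofReal (f x / (1 - g x))) =
      ⨅ δ ∈ Set.Ico (0 : ℝ) 1,
        ENNReal.ofReal (1 / (1 - δ)) * ⨅ x ∈ {y ∈ C | g y ≤ δ}, ENNReal.ofReal (f x) := by
  apply le_antisymm
  · refine le_iInf₂ fun δ hδ => ?_
    obtain ⟨hδ0, hδ1⟩ := hδ
    have h1δ : (0:ℝ) < 1 - δ := by linarith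
    have hc0 : ENNReal.ofReal (1 / (1 - δ)) ≠ 0 := by
      simp only [ne_eq, ENNReal.ofReal_eq_zero, not_le]; positivity
    have hct : ENNReal.ofReal (1 / (1 - δ)) ≠ ⊤ := ENNReal.ofReal_ne_top
    rw [ENNReal.mul_iInf_of_ne hc0 hct]
    refine le_iInf fun x => ?_
    rw [ENNReal.mul_iInf_of_ne hc0 hct]
    refine le_iInf fun hx => ?_
    obtain ⟨hxC, hxg⟩ := hx
    have key : ENNReal.ofReal (f x / (1 - g x)) ≤
        ENNReal.ofReal (1 / (1 - δ)) * ENNReal.ofReal (f x) := by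
      rw [← ENNReal.ofReal_mul (by positivity), one_div_mul_eq_div]
      apply ENNReal.ofReal_le_ofReal
      exact div_le_div_of_nonneg_left (hf x hxC) h1δ (by linarith)
    calc (⨅ x ∈ C, ENNReal.ofReal (f x / (1 - g x)))
        ≤ ENNReal.ofReal (f x / (1 - g x)) := iInf₂_le x hxC
      _ ≤ _ := key
  · refine le_iInf₂ fun x hx => ?_
    obtain ⟨hg0, hg1⟩ := hg x hx
    have h1g : (0:ℝ) < 1 - g x := by linarith
    calc (⨅ δ ∈ Set.Ico (0 : ℝ) 1,
          ENNReal.ofReal (1 / (1 - δ)) * ⨅ y ∈ {y ∈ C | g y ≤ δ}, ENNReal.ofReal (f y))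
        ≤ ENNReal.ofReal (1 / (1 - g x)) *
            ⨅ y ∈ {y ∈ C | g y ≤ g x}, ENNReal.ofReal (f y) :=
          iInf₂_le (g x) ⟨hg0, hg1⟩
      _ ≤ ENNReal.ofReal (1 / (1 - g x)) * ENNReal.ofReal (f x) := by
          gcongr
          exact iInf₂_le x ⟨hx, le_refl _⟩
      _ = ENNReal.ofReal (f x / (1 - g x)) := by
          rw [← ENNReal.ofReal_mul (by positivity), one_div_mul_eq_div]
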